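/- Let Δ > 0, let 0 ≤ s < η < e ≤ T be integers, and let p(s+1),…,p(e) be a sequence in a real inner product space with p(t) = P₁ for s < t ≤ η and p(t) = P₂ for η < t ≤ e, and set κ = ‖P₂ − P₁‖. Let b be an integer with s < b < e satisfying |b − η| ≤ Δ/6 and min{b − s, e − b} ≥ Δ/3. Then the CUSUM statistic satisfies ‖p̃^{s,e}(b)‖² ≥ Δκ²/24. -/

import Mathlib

open scoped BigOperators

/-- CUSUM weights `ω_{s,e}^t(u)`. -/
noncomputable def cusumW (s e t u : ℕ) : ℝ :=
  if u ≤ t then Real.sqrt (((e : ℝ) - t) / (((e : ℝ) - s) * ((t : ℝ) - s)))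
  else - Real.sqrt (((t : ℝ) - s) / (((e : ℝ) - s) * ((e : ℝ) - t)))

/-- CUSUM statistic `B̃^{s,e}(t)` of a sequence in a real vector space. -/
noncomputable def cusum {V : Type*} [AddCommGroup V] [Module ℝ V]
    (B : ℕ → V) (s e t : ℕ) : V :=
  ∑ u ∈ Finset.Ioc s e, cusumW s e t u • B u

/-! Since the CUSUM weights sum to zero, the statistic of a signal with a single jump at `η` is
`S • (P₁ - P₂)`, where `S` is the total weight on `(s, η]`. In closed form
`S² = (e - η)² (b - s) / ((e - s)(e - b))` if `b ≤ η` and `S² = (η - s)² (e - b) / ((e - s)(b - s))`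
if `η ≤ b`. In either case the factor `e - η` resp. `η - s` is at least half of `e - b` resp.
`b - s`, because `|b - η| ≤ Δ/6 ≤ min(b - s, e - b)/2`, and
`(b - s)(e - b)/(e - s) ≥ Δ/6` as both segments are at least `Δ/3`. -/

open Finset

theorem sum_smul_Ioc_eq_of_piecewise {V : Type*} [AddCommGroup V] [Module ℝ V]
    {w : ℕ → ℝ} {p : ℕ → V} {s η e : ℕ} {P₁ P₂ : V} (hsη : s ≤ η) (hηe : η ≤ e)
    (hw : ∑ u ∈ Ioc s e, w u = 0)
    (h1 : ∀ t, s < t → t ≤ η → p t = P₁) (h2 : ∀ t, η < t → t ≤ e → p t = P₂) :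
    ∑ u ∈ Ioc s e, w u • p u = (∑ u ∈ Ioc s η, w u) • (P₁ - P₂) := by
  have hleft : ∑ u ∈ Ioc s η, w u • p u = (∑ u ∈ Ioc s η, w u) • P₁ := by
    rw [sum_smul]
    refine sum_congr rfl fun u hu => ?_
    rw [h1 u (mem_Ioc.1 hu).1 (mem_Ioc.1 hu).2]
  have hright : ∑ u ∈ Ioc η e, w u • p u = (∑ u ∈ Ioc η e, w u) • P₂ := by
    rw [sum_smul]
    refine sum_congr rfl fun u hu => ?_
    rw [h2 u (mem_Ioc.1 hu).1 (mem_Ioc.1 hu).2]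
  have hw' : ∑ u ∈ Ioc η e, w u = -∑ u ∈ Ioc s η, w u := by
    rw [← sum_Ioc_consecutive w hsη hηe] at hw
    linarith
  rw [← sum_Ioc_consecutive _ hsη hηe, hleft, hright, hw', neg_smul, smul_sub, sub_eq_add_neg]

theorem sum_Ioc_eq_mul_of_forall_eq {f : ℕ → ℝ} {c : ℝ} {l r : ℕ} (hlr : l ≤ r)
    (hf : ∀ u ∈ Ioc l r, f u = c) : ∑ u ∈ Ioc l r, f u = ((r : ℝ) - l) * c := by
  rw [sum_congr rfl hf, sum_const, Nat.card_Ioc, nsmul_eq_mul, Nat.cast_sub hlr]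

theorem mul_sqrt_div_mul_self {x y n : ℝ} (hx : 0 < x) (hn : 0 < n) :
    x * √(y / (n * x)) = √(x * y / n) := by
  rw [← Real.sqrt_sq hx.le, ← Real.sqrt_mul (sq_nonneg x), Real.sqrt_sq hx.le]
  congr 1
  field_simp

theorem le_sq_mul_div_of_half_le {Δ x y m : ℝ} (hx : 0 < x) (hy : 0 < y)
    (hx3 : Δ / 3 ≤ x) (hy3 : Δ / 3 ≤ y) (hm : y / 2 ≤ m) :
    Δ / 24 ≤ m ^ 2 * (x / ((x + y) * y)) := by
  have hmsq : y ^ 2 / 4 ≤ m ^ 2 := by nlinarith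
  have hharm : Δ * (x + y) ≤ 6 * (x * y) := by nlinarith
  rw [mul_div_assoc', le_div_iff₀ (by positivity)]
  nlinarith [mul_le_mul_of_nonneg_right hmsq hx.le]

section CusumWeights

variable {s e t : ℕ}

theorem cusumW_of_le {u : ℕ} (hut : u ≤ t) :
    cusumW s e t u = √(((e : ℝ) - t) / (((e : ℝ) - s) * ((t : ℝ) - s))) :=
  if_pos hut

theorem cusumW_of_lt {u : ℕ} (htu : t < u) :
    cusumW s e t u = -√(((t : ℝ) - s) / (((e : ℝ) - s) * ((e : ℝ) - t))) :=
  if_neg htu.not_ge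

theorem sum_cusumW_Ioc_of_le {l r : ℕ} (hlr : l ≤ r) (hrt : r ≤ t) :
    ∑ u ∈ Ioc l r, cusumW s e t u
      = ((r : ℝ) - l) * √(((e : ℝ) - t) / (((e : ℝ) - s) * ((t : ℝ) - s))) :=
  sum_Ioc_eq_mul_of_forall_eq hlr fun _ hu => cusumW_of_le ((mem_Ioc.1 hu).2.trans hrt)

theorem sum_cusumW_Ioc_of_ge {l r : ℕ} (hlr : l ≤ r) (htl : t ≤ l) :
    ∑ u ∈ Ioc l r, cusumW s e t u
      = -(((r : ℝ) - l) * √(((t : ℝ) - s) / (((e : ℝ) - s) * ((e : ℝ) - t)))) := by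
  rw [sum_Ioc_eq_mul_of_forall_eq hlr fun _ hu => cusumW_of_lt (htl.trans_lt (mem_Ioc.1 hu).1),
    mul_neg]

/-- Both sides equal `√((t - s)(e - t)/(e - s))`. -/
theorem cusumW_left_mass_eq_right_mass (hst : s < t) (hte : t < e) :
    ((t : ℝ) - s) * √(((e : ℝ) - t) / (((e : ℝ) - s) * ((t : ℝ) - s)))
      = ((e : ℝ) - t) * √(((t : ℝ) - s) / (((e : ℝ) - s) * ((e : ℝ) - t))) := by
  have hts : (0 : ℝ) < (t : ℝ) - s := sub_pos.2 (Nat.cast_lt.2 hst)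
  have het : (0 : ℝ) < (e : ℝ) - t := sub_pos.2 (Nat.cast_lt.2 hte)
  rw [mul_sqrt_div_mul_self hts (by linarith), mul_sqrt_div_mul_self het (by linarith), mul_comm]

theorem sum_cusumW_eq_zero (hst : s < t) (hte : t < e) :
    ∑ u ∈ Ioc s e, cusumW s e t u = 0 := by
  rw [← sum_Ioc_consecutive _ hst.le hte.le, sum_cusumW_Ioc_of_le hst.le le_rfl,
    sum_cusumW_Ioc_of_ge hte.le le_rfl, cusumW_left_mass_eq_right_mass hst hte, add_neg_cancel]

theorem sq_sum_cusumW_Ioc_of_le {η : ℕ} (hst : s < t) (htη : t ≤ η) (hte : t < e) :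
    (∑ u ∈ Ioc s η, cusumW s e t u) ^ 2
      = ((e : ℝ) - η) ^ 2 * (((t : ℝ) - s) / (((e : ℝ) - s) * ((e : ℝ) - t))) := by
  have hts : (0 : ℝ) < (t : ℝ) - s := sub_pos.2 (Nat.cast_lt.2 hst)
  have het : (0 : ℝ) < (e : ℝ) - t := sub_pos.2 (Nat.cast_lt.2 hte)
  rw [← sum_Ioc_consecutive _ hst.le htη, sum_cusumW_Ioc_of_le hst.le le_rfl,
    sum_cusumW_Ioc_of_ge htη le_rfl, cusumW_left_mass_eq_right_mass hst hte, ← sub_eq_add_neg,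
    ← sub_mul, mul_pow, Real.sq_sqrt (div_nonneg hts.le (by nlinarith))]
  ring

theorem sq_sum_cusumW_Ioc_of_ge {η : ℕ} (hsη : s ≤ η) (hηt : η ≤ t) (hst : s < t) (hte : t < e) :
    (∑ u ∈ Ioc s η, cusumW s e t u) ^ 2
      = ((η : ℝ) - s) ^ 2 * (((e : ℝ) - t) / (((e : ℝ) - s) * ((t : ℝ) - s))) := by
  have hts : (0 : ℝ) < (t : ℝ) - s := sub_pos.2 (Nat.cast_lt.2 hst)
  have het : (0 : ℝ) < (e : ℝ) - t := sub_pos.2 (Nat.cast_lt.2 hte)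
  rw [sum_cusumW_Ioc_of_le hsη hηt, mul_pow, Real.sq_sqrt (div_nonneg het.le (by nlinarith))]

end CusumWeights

theorem cusum_signal_lower_bound_general
    {E : Type*} [NormedAddCommGroup E] [InnerProductSpace ℝ E]
    (Δ : ℝ)
    (s η e : ℕ) (hsη : s < η) (hηe : η < e)
    (p : ℕ → E) (P₁ P₂ : E)
    (h1 : ∀ t, s < t → t ≤ η → p t = P₁)
    (h2 : ∀ t, η < t → t ≤ e → p t = P₂)
    (κ : ℝ) (hκ : κ = ‖P₂ - P₁‖)
    (b : ℕ) (hsb : s < b) (hbe : b < e)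
    (hclose : |(b : ℝ) - (η : ℝ)| ≤ Δ / 6)
    (hsep : Δ / 3 ≤ min ((b : ℝ) - (s : ℝ)) ((e : ℝ) - (b : ℝ))) :
    Δ * κ ^ 2 / 24 ≤ ‖cusum p s e b‖ ^ 2 := by
  have hcusum : cusum p s e b = (∑ u ∈ Ioc s η, cusumW s e b u) • (P₁ - P₂) :=
    sum_smul_Ioc_eq_of_piecewise hsη.le hηe.le (sum_cusumW_eq_zero hsb hbe) h1 h2
  have hbs : (0 : ℝ) < (b : ℝ) - s := sub_pos.2 (Nat.cast_lt.2 hsb)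
  have heb : (0 : ℝ) < (e : ℝ) - b := sub_pos.2 (Nat.cast_lt.2 hbe)
  have hbs3 : Δ / 3 ≤ (b : ℝ) - s := hsep.trans (min_le_left _ _)
  have heb3 : Δ / 3 ≤ (e : ℝ) - b := hsep.trans (min_le_right _ _)
  obtain ⟨hηb, hbη⟩ := abs_le.1 hclose
  have hmass : Δ / 24 ≤ (∑ u ∈ Ioc s η, cusumW s e b u) ^ 2 := by
    rcases le_total b η with hle | hge
    · rw [sq_sum_cusumW_Ioc_of_le hsb hle hbe, show (e : ℝ) - s = (b - s) + (e - b) by ring]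
      exact le_sq_mul_div_of_half_le hbs heb hbs3 heb3 (by linarith)
    · rw [sq_sum_cusumW_Ioc_of_ge hsη.le hge hsb hbe, show (e : ℝ) - s = (e - b) + (b - s) by ring]
      exact le_sq_mul_div_of_half_le heb hbs heb3 hbs3 (by linarith)
  rw [hcusum, norm_smul, mul_pow, Real.norm_eq_abs, sq_abs, norm_sub_rev, ← hκ]
  nlinarith [sq_nonneg κ]

/-- **Lemma (CUSUM signal strength near the change point).**  For a sequence in a
real inner product space equal to `P₁` on `(s, η]` and `P₂` on `(η, e]`, with
`κ = ‖P₂ − P₁‖`, any point `b` with `|b − η| ≤ Δ/6` and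
`min{b − s, e − b} ≥ Δ/3` satisfies `‖p̃^{s,e}(b)‖² ≥ Δκ²/24`. -/
theorem cusum_signal_lower_bound
    {E : Type*} [NormedAddCommGroup E] [InnerProductSpace ℝ E]
    (Δ : ℝ) (hΔ : 0 < Δ)
    (T s η e : ℕ) (hsη : s < η) (hηe : η < e) (heT : e ≤ T)
    (p : ℕ → E) (P₁ P₂ : E)
    (h1 : ∀ t, s < t → t ≤ η → p t = P₁)
    (h2 : ∀ t, η < t → t ≤ e → p t = P₂)
    (κ : ℝ) (hκ : κ = ‖P₂ - P₁‖)
    (b : ℕ) (hsb : s < b) (hbe : b < e)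
    (hclose : |(b : ℝ) - (η : ℝ)| ≤ Δ / 6)
    (hsep : Δ / 3 ≤ min ((b : ℝ) - (s : ℝ)) ((e : ℝ) - (b : ℝ))) :
    Δ * κ ^ 2 / 24 ≤ ‖cusum p s e b‖ ^ 2 :=
  cusum_signal_lower_bound_general Δ s η e hsη hηe p P₁ P₂ h1 h2 κ hκ b hsb hbe hclose hsep
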